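/- Let X ∈ [0,1) be a random variable, Λ(λ) = log E[X^λ] for λ ≥ 0, and Λ*(z) = sup_λ { λz − Λ(λ) }. For the SARRT with attachment X, define Ψ(c) = c Λ*(−1/c). Then for every c > 0 and n ≥ 1, P(D_n ≥ c log n + 2) ≤ n^{−Ψ(c)}, where D_n is the depth of node n. -/

import Mathlib

open MeasureTheory ProbabilityTheory Filter Finset
open scoped ENNReal

/-- The label of the `j`-th ancestor of node `n` in the SARRT. -/
noncomputable def sarrtLabel {Ω : Type*} (X : ℕ → Ω → ℝ) (n : ℕ) : ℕ → Ω → ℕ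
  | 0 => fun _ => n
  | j + 1 => fun ω => ⌊(sarrtLabel X n j ω : ℝ) * X (sarrtLabel X n j ω) ω⌋₊

/-- The depth of node `n` in the SARRT. -/
noncomputable def sarrtDepth {Ω : Type*} (X : ℕ → Ω → ℝ) (n : ℕ) (ω : Ω) : ℕ :=
  sInf {j : ℕ | sarrtLabel X n j ω = 0}

/-- The cumulant generating function `Λ(λ) = log E[X₀^λ]` of `log X₀`. -/
noncomputable def cgfLogX {Ω : Type*} [MeasurableSpace Ω] (P : Measure Ω)
    (X0 : Ω → ℝ) (l : ℝ) : ℝ :=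
  Real.log (∫ ω, X0 ω ^ l ∂P)

/-- The Fenchel–Legendre dual `Λ*(z) = sup_{λ ≥ 0} {λ z − Λ(λ)}`. -/
noncomputable def legendreLogX {Ω : Type*} [MeasurableSpace Ω] (P : Measure Ω)
    (X0 : Ω → ℝ) (z : ℝ) : ℝ :=
  ⨆ l : {l : ℝ // 0 ≤ l}, ((l : ℝ) * z - cgfLogX P X0 l)

section Aux

variable {Ω : Type*}

lemma sarrtLabel_succ_def (X : ℕ → Ω → ℝ) (n j : ℕ) (ω : Ω) :
    sarrtLabel X n (j + 1) ω = ⌊(sarrtLabel X n j ω : ℝ) * X (sarrtLabel X n j ω) ω⌋₊ := rfl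

lemma sarrt_comp_measurable {α β : Type*} [MeasurableSpace α] [MeasurableSpace β]
    {g : α → ℕ} (hg : Measurable g) {F : ℕ → α → β} (hF : ∀ k, Measurable (F k)) :
    Measurable fun a => F (g a) a := by
  have h : (fun a => F (g a) a) = (fun p : α × ℕ => F p.2 p.1) ∘ fun a => (a, g a) := rfl
  rw [h]
  exact (measurable_from_prod_countable_left fun k => hF k).comp (measurable_id.prodMk hg)

lemma sarrtLabel_measurable [MeasurableSpace Ω] {X : ℕ → Ω → ℝ}
    (hX : ∀ i, Measurable (X i)) (n : ℕ) : ∀ j, Measurable (sarrtLabel X n j)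
  | 0 => measurable_const
  | (j + 1) => by
    have hL := sarrtLabel_measurable hX n j
    have h1 : Measurable fun ω => (sarrtLabel X n j ω : ℝ) :=
      (measurable_from_top (f := (Nat.cast : ℕ → ℝ))).comp hL
    have h2 : Measurable fun ω => X (sarrtLabel X n j ω) ω := sarrt_comp_measurable hL hX
    exact (h1.mul h2).nat_floor

variable {X : ℕ → Ω → ℝ} {n : ℕ}

lemma sarrtLabel_succ_le (hrange : ∀ i ω, X i ω ∈ Set.Ico (0 : ℝ) 1) (j : ℕ) (ω : Ω) :
    sarrtLabel X n (j + 1) ω ≤ sarrtLabel X n j ω := by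
  rw [sarrtLabel_succ_def]
  calc ⌊(sarrtLabel X n j ω : ℝ) * X (sarrtLabel X n j ω) ω⌋₊
      ≤ ⌊(sarrtLabel X n j ω : ℝ)⌋₊ :=
        Nat.floor_mono (mul_le_of_le_one_right (Nat.cast_nonneg _) (hrange _ ω).2.le)
    _ = sarrtLabel X n j ω := Nat.floor_natCast _

lemma sarrtLabel_antitone (hrange : ∀ i ω, X i ω ∈ Set.Ico (0 : ℝ) 1) {j j' : ℕ}
    (h : j ≤ j') (ω : Ω) : sarrtLabel X n j' ω ≤ sarrtLabel X n j ω := by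
  induction j' with
  | zero =>
    have : j = 0 := by omega
    subst this; exact le_rfl
  | succ i ih =>
    rcases Nat.lt_or_ge j (i + 1) with h' | h'
    · exact (sarrtLabel_succ_le hrange i ω).trans (ih (by omega))
    · have : j = i + 1 := by omega
      subst this; exact le_rfl

lemma sarrtLabel_le_n (hrange : ∀ i ω, X i ω ∈ Set.Ico (0 : ℝ) 1) (j : ℕ) (ω : Ω) :
    sarrtLabel X n j ω ≤ n :=
  sarrtLabel_antitone hrange (Nat.zero_le j) ω

lemma sarrtLabel_succ_lt (hrange : ∀ i ω, X i ω ∈ Set.Ico (0 : ℝ) 1) {j : ℕ} {ω : Ω}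
    (h : sarrtLabel X n j ω ≠ 0) : sarrtLabel X n (j + 1) ω < sarrtLabel X n j ω := by
  rw [sarrtLabel_succ_def]
  rw [Nat.floor_lt' h]
  exact mul_lt_of_lt_one_right (by positivity) (hrange _ ω).2

lemma sarrtLabel_lt_of_lt (hrange : ∀ i ω, X i ω ∈ Set.Ico (0 : ℝ) 1) {t j : ℕ} {ω : Ω}
    (hjt : j < t) (hne : sarrtLabel X n j ω ≠ 0) :
    sarrtLabel X n t ω < sarrtLabel X n j ω :=
  lt_of_le_of_lt (sarrtLabel_antitone hrange (by omega) ω) (sarrtLabel_succ_lt hrange hne)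

lemma sarrtLabel_cast_le_prod (hrange : ∀ i ω, X i ω ∈ Set.Ico (0 : ℝ) 1) (t : ℕ) (ω : Ω) :
    (sarrtLabel X n t ω : ℝ) ≤ n * ∏ j ∈ Finset.range t, X (sarrtLabel X n j ω) ω := by
  induction t with
  | zero => simp [sarrtLabel]
  | succ s ih =>
    rw [Finset.prod_range_succ, ← mul_assoc]
    calc (sarrtLabel X n (s + 1) ω : ℝ)
        ≤ (sarrtLabel X n s ω : ℝ) * X (sarrtLabel X n s ω) ω := Nat.floor_le (by
          exact mul_nonneg (Nat.cast_nonneg _) (hrange _ ω).1)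
      _ ≤ (↑n * ∏ j ∈ Finset.range s, X (sarrtLabel X n j ω) ω) * X (sarrtLabel X n s ω) ω :=
          mul_le_mul_of_nonneg_right ih (hrange _ ω).1

lemma sarrtDepth_ne {t : ℕ} {ω : Ω} (h : t + 1 ≤ sarrtDepth X n ω) :
    ∀ j ≤ t, sarrtLabel X n j ω ≠ 0 := by
  intro j hj h0
  have := Nat.sInf_le (show j ∈ {j : ℕ | sarrtLabel X n j ω = 0} from h0)
  unfold sarrtDepth at h
  omega

lemma sarrtLabel_agree {Ω' : Type*} {X' : ℕ → Ω' → ℝ} {k : ℕ} {ω : Ω} {ω' : Ω'}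
    (hrange : ∀ i ω, X i ω ∈ Set.Ico (0 : ℝ) 1)
    (hagree : ∀ i, k < i → i ≤ n → X' i ω' = X i ω) {t : ℕ}
    (hcond : ∀ j < t, k < sarrtLabel X n j ω) :
    ∀ j ≤ t, sarrtLabel X' n j ω' = sarrtLabel X n j ω := by
  intro j hj
  induction j with
  | zero => rfl
  | succ i ih =>
    have hie := ih (by omega)
    rw [sarrtLabel_succ_def, sarrtLabel_succ_def, hie,
      hagree _ (hcond i (by omega)) (sarrtLabel_le_n hrange i ω)]

lemma sarrtLabel_agree' {Ω' : Type*} {X' : ℕ → Ω' → ℝ} {k : ℕ} {ω : Ω} {ω' : Ω'}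
    (hrange : ∀ i ω, X i ω ∈ Set.Ico (0 : ℝ) 1)
    (hagree : ∀ i, k < i → i ≤ n → X' i ω' = X i ω) {t : ℕ}
    (hcond : ∀ j < t, k < sarrtLabel X' n j ω') :
    ∀ j ≤ t, sarrtLabel X' n j ω' = sarrtLabel X n j ω := by
  intro j hj
  induction j with
  | zero => rfl
  | succ i ih =>
    have hie := ih (by omega)
    have hki : k < sarrtLabel X n i ω := hie ▸ hcond i (by omega)
    rw [sarrtLabel_succ_def, sarrtLabel_succ_def, hie,
      hagree _ hki (sarrtLabel_le_n hrange i ω)]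

end Aux

section Part2

open MeasureTheory ProbabilityTheory Finset

variable {Ω : Type*}

/-- The truncated Chernoff weight. -/
noncomputable def sarrtF (X : ℕ → Ω → ℝ) (n : ℕ) (l : ℝ) (s : ℕ) : Ω → ℝ :=
  Set.indicator {ω | ∀ j < s, sarrtLabel X n j ω ≠ 0}
    (fun ω => ∏ j ∈ Finset.range s, X (sarrtLabel X n j ω) ω ^ l)

variable {X : ℕ → Ω → ℝ} {n : ℕ} {l : ℝ}

lemma sarrtF_measurable [MeasurableSpace Ω] (hX : ∀ i, Measurable (X i)) (hl : 0 ≤ l) (s : ℕ) :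
    Measurable (sarrtF X n l s) := by
  apply Measurable.indicator
  · apply Finset.measurable_prod
    intro j _
    exact ((Real.continuous_rpow_const hl).measurable).comp
      (sarrt_comp_measurable (sarrtLabel_measurable hX n j) hX)
  · have : {ω | ∀ j < s, sarrtLabel X n j ω ≠ 0} =
        ⋂ (j : ℕ) (_ : j < s), (sarrtLabel X n j) ⁻¹' {0}ᶜ := by
      ext ω; simp [Set.mem_iInter]
    rw [this]
    exact MeasurableSet.iInter fun j => MeasurableSet.iInter fun _ =>
      (sarrtLabel_measurable hX n j) (Set.to_countable _).measurableSet.compl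

lemma sarrtF_nonneg (hrange : ∀ i ω, X i ω ∈ Set.Ico (0 : ℝ) 1) (s : ℕ) (ω : Ω) :
    0 ≤ sarrtF X n l s ω := by
  apply Set.indicator_nonneg
  intro ω' _
  exact Finset.prod_nonneg fun j _ => Real.rpow_nonneg (hrange _ _).1 l

lemma sarrtF_le_one (hrange : ∀ i ω, X i ω ∈ Set.Ico (0 : ℝ) 1) (hl : 0 ≤ l) (s : ℕ) (ω : Ω) :
    sarrtF X n l s ω ≤ 1 := by
  classical
  rw [sarrtF, Set.indicator]
  split
  · exact Finset.prod_le_one (fun j _ => Real.rpow_nonneg (hrange _ _).1 l)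
      (fun j _ => Real.rpow_le_one (hrange _ _).1 (hrange _ _).2.le hl)
  · norm_num

lemma sarrt_integrable_of_01 [MeasurableSpace Ω] {P : Measure Ω} [IsProbabilityMeasure P]
    {h : Ω → ℝ} (hm : Measurable h) (h0 : ∀ ω, 0 ≤ h ω) (h1 : ∀ ω, h ω ≤ 1) :
    Integrable h P := by
  refine (integrable_const (1 : ℝ)).mono' hm.aestronglyMeasurable (ae_of_all _ fun ω => ?_)
  rw [Real.norm_eq_abs, abs_le]
  constructor <;> [linarith [h0 ω]; exact h1 ω]

end Part2

section Part3

open MeasureTheory ProbabilityTheory Finset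

variable {Ω : Type*} [MeasurableSpace Ω]

/-- Single-step weight with prescribed current label. -/
noncomputable def sarrtG (X : ℕ → Ω → ℝ) (n : ℕ) (l : ℝ) (s k : ℕ) : Ω → ℝ :=
  Set.indicator {ω | sarrtLabel X n s ω = k ∧ ∀ j < s, sarrtLabel X n j ω ≠ 0}
    (fun ω => ∏ j ∈ Finset.range s, X (sarrtLabel X n j ω) ω ^ l)

variable {X : ℕ → Ω → ℝ} {n : ℕ} {l : ℝ}

lemma sarrtG_measurable (hX : ∀ i, Measurable (X i)) (hl : 0 ≤ l) (s k : ℕ) :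
    Measurable (sarrtG X n l s k) := by
  apply Measurable.indicator
  · exact Finset.measurable_prod _ fun j _ => ((Real.continuous_rpow_const hl).measurable).comp
      (sarrt_comp_measurable (sarrtLabel_measurable hX n j) hX)
  · have h : {ω | sarrtLabel X n s ω = k ∧ ∀ j < s, sarrtLabel X n j ω ≠ 0} =
        (sarrtLabel X n s) ⁻¹' {k} ∩ ⋂ (j : ℕ) (_ : j < s), (sarrtLabel X n j) ⁻¹' {0}ᶜ := by
      ext ω; simp [Set.mem_iInter]
    rw [h]
    exact ((sarrtLabel_measurable hX n s) (Set.to_countable _).measurableSet).inter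
      (MeasurableSet.iInter fun j => MeasurableSet.iInter fun _ =>
        (sarrtLabel_measurable hX n j) (Set.to_countable _).measurableSet.compl)

lemma sarrtG_nonneg (hrange : ∀ i ω, X i ω ∈ Set.Ico (0 : ℝ) 1) (s k : ℕ) (ω : Ω) :
    0 ≤ sarrtG X n l s k ω :=
  Set.indicator_nonneg (fun ω' _ => Finset.prod_nonneg fun j _ =>
    Real.rpow_nonneg (hrange _ _).1 l) ω

lemma sarrtG_le_one (hrange : ∀ i ω, X i ω ∈ Set.Ico (0 : ℝ) 1) (hl : 0 ≤ l) (s k : ℕ) (ω : Ω) :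
    sarrtG X n l s k ω ≤ 1 := by
  classical
  rw [sarrtG, Set.indicator]
  split
  · exact Finset.prod_le_one (fun j _ => Real.rpow_nonneg (hrange _ _).1 l)
      (fun j _ => Real.rpow_le_one (hrange _ _).1 (hrange _ _).2.le hl)
  · norm_num

/-- The independence step: the weight with prescribed current label `k` is independent
of `X k`, hence the integral factorizes. -/
lemma sarrt_indep_step (P : Measure Ω) [IsProbabilityMeasure P]
    (hmeas : ∀ i, Measurable (X i))
    (hrange : ∀ i ω, X i ω ∈ Set.Ico (0 : ℝ) 1)
    (hindep : iIndepFun X P)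
    (hl : 0 ≤ l) (s k : ℕ) (hk : 1 ≤ k) :
    ∫ ω, sarrtG X n l s k ω * X k ω ^ l ∂P
      = (∫ ω, sarrtG X n l s k ω ∂P) * ∫ ω, X k ω ^ l ∂P := by
  classical
  set S : Finset ℕ := Finset.Ioc k n with hS
  set X' : ℕ → (↥S → ℝ) → ℝ := fun i y => if h : i ∈ S then y ⟨i, h⟩ else 0 with hX'
  have hX'meas : ∀ i, Measurable (X' i) := by
    intro i
    by_cases h : i ∈ S
    · simp only [hX', dif_pos h]; exact measurable_pi_apply _
    · simp only [hX', dif_neg h]; exact measurable_const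
  have hMmeas : ∀ j, Measurable (sarrtLabel X' n j) := fun j => sarrtLabel_measurable hX'meas n j
  set Hcond : Set (↥S → ℝ) :=
    {y | sarrtLabel X' n s y = k ∧ ∀ j < s, k < sarrtLabel X' n j y} with hHcond
  set H : (↥S → ℝ) → ℝ :=
    Set.indicator Hcond (fun y => ∏ j ∈ Finset.range s, X' (sarrtLabel X' n j y) y ^ l) with hH
  have hHmeas : Measurable H := by
    apply Measurable.indicator
    · exact Finset.measurable_prod _ fun j _ => ((Real.continuous_rpow_const hl).measurable).comp
        (sarrt_comp_measurable (hMmeas j) hX'meas)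
    · have h : Hcond = (sarrtLabel X' n s) ⁻¹' {k} ∩
          ⋂ (j : ℕ) (_ : j < s), (sarrtLabel X' n j) ⁻¹' (Set.Ioi k) := by
        ext y; simp [hHcond, Set.mem_iInter]
      rw [h]
      exact ((hMmeas s) (Set.to_countable _).measurableSet).inter
        (MeasurableSet.iInter fun j => MeasurableSet.iInter fun _ =>
          (hMmeas j) (Set.to_countable _).measurableSet)
  have hpoint : ∀ ω : Ω, H (fun i : ↥S => X i ω) = sarrtG X n l s k ω := by
    intro ω
    have hagree : ∀ i, k < i → i ≤ n → X' i (fun i : ↥S => X i ω) = X i ω := by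
      intro i h1 h2
      simp only [hX', dif_pos (Finset.mem_Ioc.mpr ⟨h1, h2⟩)]
      exact dif_pos (Finset.mem_Ioc.mpr ⟨h1, h2⟩)
    by_cases hev : sarrtLabel X n s ω = k ∧ ∀ j < s, sarrtLabel X n j ω ≠ 0
    · have hcond : ∀ j < s, k < sarrtLabel X n j ω := by
        intro j hj
        have h2 := sarrtLabel_lt_of_lt hrange hj (hev.2 j hj)
        rw [hev.1] at h2
        exact h2
      have heq : ∀ j ≤ s, sarrtLabel X' n j (fun i : ↥S => X i ω) = sarrtLabel X n j ω :=
        sarrtLabel_agree hrange hagree hcond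
      have hmem : (fun i : ↥S => X i ω) ∈ Hcond :=
        ⟨by rw [heq s le_rfl]; exact hev.1, fun j hj => by rw [heq j hj.le]; exact hcond j hj⟩
      rw [hH, Set.indicator_of_mem hmem, sarrtG, Set.indicator_of_mem
        (show ω ∈ {ω | sarrtLabel X n s ω = k ∧ ∀ j < s, sarrtLabel X n j ω ≠ 0} from hev)]
      refine Finset.prod_congr rfl fun j hj => ?_
      have hj' : j < s := Finset.mem_range.mp hj
      rw [heq j hj'.le, hagree _ (hcond j hj') (sarrtLabel_le_n hrange j ω)]
    · have hnot : (fun i : ↥S => X i ω) ∉ Hcond := by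
        intro hmem
        obtain ⟨h1, h2⟩ := hmem
        have heq : ∀ j ≤ s, sarrtLabel X' n j (fun i : ↥S => X i ω) = sarrtLabel X n j ω :=
          sarrtLabel_agree' hrange hagree h2
        refine hev ⟨by rw [← heq s le_rfl]; exact h1, fun j hj => ?_⟩
        have h3 := h2 j hj
        rw [heq j hj.le] at h3
        omega
      rw [hH, Set.indicator_of_notMem hnot, sarrtG, Set.indicator_of_notMem
        (show ω ∉ {ω | sarrtLabel X n s ω = k ∧ ∀ j < s, sarrtLabel X n j ω ≠ 0} from hev)]
  have hdisj : Disjoint S ({k} : Finset ℕ) := by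
    simp only [Finset.disjoint_singleton_right, hS, Finset.mem_Ioc]
    omega
  set ψ : (↥({k} : Finset ℕ) → ℝ) → ℝ :=
    fun v => v ⟨k, Finset.mem_singleton_self k⟩ ^ l with hψ
  have hψmeas : Measurable ψ :=
    ((Real.continuous_rpow_const hl).measurable).comp (measurable_pi_apply _)
  have hIF := (hindep.indepFun_finset S {k} hdisj hmeas).comp hHmeas hψmeas
  have e1 : (H ∘ fun ω (i : ↥S) => X i ω) = sarrtG X n l s k := funext hpoint
  have e2 : (ψ ∘ fun ω (i : ↥({k} : Finset ℕ)) => X i ω) = fun ω => X k ω ^ l := rfl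
  rw [e1, e2] at hIF
  have hXl_meas : Measurable fun ω => X k ω ^ l :=
    ((Real.continuous_rpow_const hl).measurable).comp (hmeas k)
  have := hIF.integral_mul_eq_mul_integral (sarrtG_measurable hmeas hl s k).aestronglyMeasurable
    hXl_meas.aestronglyMeasurable
  exact this

end Part3

section Part4

open MeasureTheory ProbabilityTheory Finset

variable {Ω : Type*} [MeasurableSpace Ω] {X : ℕ → Ω → ℝ} {n : ℕ} {l : ℝ}

lemma sarrt_split (hrange : ∀ i ω, X i ω ∈ Set.Ico (0 : ℝ) 1) (s : ℕ) (ω : Ω) :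
    sarrtF X n l (s + 1) ω = ∑ k ∈ Finset.Icc 1 n, sarrtG X n l s k ω * X k ω ^ l := by
  by_cases hev : ∀ j < s + 1, sarrtLabel X n j ω ≠ 0
  · have hev' : ∀ j < s, sarrtLabel X n j ω ≠ 0 := fun j hj => hev j (by omega)
    have hsne : sarrtLabel X n s ω ≠ 0 := hev s (by omega)
    have hk0 : sarrtLabel X n s ω ∈ Finset.Icc 1 n :=
      Finset.mem_Icc.mpr ⟨Nat.one_le_iff_ne_zero.mpr hsne, sarrtLabel_le_n hrange s ω⟩
    rw [Finset.sum_eq_single_of_mem _ hk0 (fun b _ hb => by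
      rw [sarrtG, Set.indicator_of_notMem
        (show ω ∉ {ω | sarrtLabel X n s ω = b ∧ ∀ j < s, sarrtLabel X n j ω ≠ 0} from
          fun hc => hb (hc.1 ▸ rfl)), zero_mul])]
    rw [sarrtF, Set.indicator_of_mem
      (show ω ∈ {ω | ∀ j < s + 1, sarrtLabel X n j ω ≠ 0} from hev)]
    rw [sarrtG, Set.indicator_of_mem
      (show ω ∈ {ω' | sarrtLabel X n s ω' = sarrtLabel X n s ω ∧
        ∀ j < s, sarrtLabel X n j ω' ≠ 0} from ⟨rfl, hev'⟩)]
    rw [Finset.prod_range_succ]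
  · rw [sarrtF, Set.indicator_of_notMem
      (show ω ∉ {ω | ∀ j < s + 1, sarrtLabel X n j ω ≠ 0} from hev)]
    symm
    apply Finset.sum_eq_zero
    intro k hk
    have hk1 : 1 ≤ k := (Finset.mem_Icc.mp hk).1
    rw [sarrtG, Set.indicator_of_notMem
      (show ω ∉ {ω | sarrtLabel X n s ω = k ∧ ∀ j < s, sarrtLabel X n j ω ≠ 0} from by
        intro hc
        refine hev fun j hj => ?_
        rcases Nat.lt_succ_iff_lt_or_eq.mp hj with h | h
        · exact hc.2 j h
        · subst h; rw [hc.1]; omega), zero_mul]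

lemma sarrt_sum_le (hrange : ∀ i ω, X i ω ∈ Set.Ico (0 : ℝ) 1) (s : ℕ) (ω : Ω) :
    ∑ k ∈ Finset.Icc 1 n, sarrtG X n l s k ω ≤ sarrtF X n l s ω := by
  by_cases hev : ∀ j < s, sarrtLabel X n j ω ≠ 0
  · have hfs : sarrtF X n l s ω = ∏ j ∈ Finset.range s, X (sarrtLabel X n j ω) ω ^ l :=
      Set.indicator_of_mem (show ω ∈ {ω | ∀ j < s, sarrtLabel X n j ω ≠ 0} from hev) _
    by_cases hk : sarrtLabel X n s ω ∈ Finset.Icc 1 n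
    · rw [Finset.sum_eq_single_of_mem _ hk (fun b _ hb => by
        rw [sarrtG]
        exact Set.indicator_of_notMem
          (show ω ∉ {ω | sarrtLabel X n s ω = b ∧ ∀ j < s, sarrtLabel X n j ω ≠ 0} from
            fun hc => hb (hc.1 ▸ rfl)) _), hfs]
      exact le_of_eq (Set.indicator_of_mem
        (show ω ∈ {ω' | sarrtLabel X n s ω' = sarrtLabel X n s ω ∧
          ∀ j < s, sarrtLabel X n j ω' ≠ 0} from ⟨rfl, hev⟩) _)
    · rw [Finset.sum_eq_zero (fun b hb => by
        rw [sarrtG]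
        exact Set.indicator_of_notMem
          (show ω ∉ {ω | sarrtLabel X n s ω = b ∧ ∀ j < s, sarrtLabel X n j ω ≠ 0} from
            fun hc => hk (hc.1 ▸ hb)) _), hfs]
      exact Finset.prod_nonneg fun j _ => Real.rpow_nonneg (hrange _ _).1 l
  · rw [sarrtF, Set.indicator_of_notMem
      (show ω ∉ {ω | ∀ j < s, sarrtLabel X n j ω ≠ 0} from hev)]
    apply le_of_eq
    apply Finset.sum_eq_zero
    intro b _
    rw [sarrtG]
    exact Set.indicator_of_notMem
      (show ω ∉ {ω | sarrtLabel X n s ω = b ∧ ∀ j < s, sarrtLabel X n j ω ≠ 0} from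
        fun hc => hev hc.2) _

lemma sarrt_rec (P : Measure Ω) [IsProbabilityMeasure P]
    (hmeas : ∀ i, Measurable (X i))
    (hrange : ∀ i ω, X i ω ∈ Set.Ico (0 : ℝ) 1)
    (hindep : iIndepFun X P)
    (hident : ∀ i, IdentDistrib (X i) (X 0) P P)
    (hl : 0 ≤ l) (s : ℕ) :
    ∫ ω, sarrtF X n l (s + 1) ω ∂P
      ≤ (∫ ω, X 0 ω ^ l ∂P) * ∫ ω, sarrtF X n l s ω ∂P := by
  have hXl_meas : ∀ k : ℕ, Measurable fun ω => X k ω ^ l := fun k =>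
    ((Real.continuous_rpow_const hl).measurable).comp (hmeas k)
  have hXl_0 : ∀ (k : ℕ) ω, 0 ≤ X k ω ^ l := fun k ω => Real.rpow_nonneg (hrange k ω).1 l
  have hXl_1 : ∀ (k : ℕ) ω, X k ω ^ l ≤ 1 := fun k ω =>
    Real.rpow_le_one (hrange k ω).1 (hrange k ω).2.le hl
  have hm_eq : ∀ k : ℕ, ∫ ω, X k ω ^ l ∂P = ∫ ω, X 0 ω ^ l ∂P := fun k =>
    ((hident k).comp ((Real.continuous_rpow_const hl).measurable)).integral_eq
  have hm0 : 0 ≤ ∫ ω, X 0 ω ^ l ∂P := integral_nonneg fun ω => hXl_0 0 ω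
  have hgint : ∀ k, Integrable (fun ω => sarrtG X n l s k ω * X k ω ^ l) P := fun k =>
    sarrt_integrable_of_01 ((sarrtG_measurable hmeas hl s k).mul (hXl_meas k))
      (fun ω => mul_nonneg (sarrtG_nonneg hrange s k ω) (hXl_0 k ω))
      (fun ω => mul_le_one₀ (sarrtG_le_one hrange hl s k ω) (hXl_0 k ω) (hXl_1 k ω))
  have hgint' : ∀ k, Integrable (sarrtG X n l s k) P := fun k =>
    sarrt_integrable_of_01 (sarrtG_measurable hmeas hl s k)
      (sarrtG_nonneg hrange s k) (sarrtG_le_one hrange hl s k)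
  have hfint : Integrable (sarrtF X n l s) P :=
    sarrt_integrable_of_01 (sarrtF_measurable hmeas hl s)
      (sarrtF_nonneg hrange s) (sarrtF_le_one hrange hl s)
  calc ∫ ω, sarrtF X n l (s + 1) ω ∂P
      = ∫ ω, ∑ k ∈ Finset.Icc 1 n, sarrtG X n l s k ω * X k ω ^ l ∂P :=
        integral_congr_ae (ae_of_all _ (sarrt_split hrange s))
    _ = ∑ k ∈ Finset.Icc 1 n, ∫ ω, sarrtG X n l s k ω * X k ω ^ l ∂P :=
        integral_finset_sum _ fun k _ => hgint k
    _ = ∑ k ∈ Finset.Icc 1 n, (∫ ω, sarrtG X n l s k ω ∂P) * ∫ ω, X 0 ω ^ l ∂P := by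
        refine Finset.sum_congr rfl fun k hk => ?_
        rw [sarrt_indep_step P hmeas hrange hindep hl s k (Finset.mem_Icc.mp hk).1, hm_eq k]
    _ = (∫ ω, ∑ k ∈ Finset.Icc 1 n, sarrtG X n l s k ω ∂P) * ∫ ω, X 0 ω ^ l ∂P := by
        rw [← Finset.sum_mul, ← integral_finset_sum _ fun k _ => hgint' k]
    _ ≤ (∫ ω, sarrtF X n l s ω ∂P) * ∫ ω, X 0 ω ^ l ∂P :=
        mul_le_mul_of_nonneg_right
          (integral_mono (integrable_finset_sum _ fun k _ => hgint' k) hfint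
            (fun ω => sarrt_sum_le hrange s ω)) hm0
    _ = (∫ ω, X 0 ω ^ l ∂P) * ∫ ω, sarrtF X n l s ω ∂P := mul_comm _ _

lemma sarrt_F_le_pow (P : Measure Ω) [IsProbabilityMeasure P]
    (hmeas : ∀ i, Measurable (X i))
    (hrange : ∀ i ω, X i ω ∈ Set.Ico (0 : ℝ) 1)
    (hindep : iIndepFun X P)
    (hident : ∀ i, IdentDistrib (X i) (X 0) P P)
    (hl : 0 ≤ l) (t : ℕ) :
    ∫ ω, sarrtF X n l t ω ∂P ≤ (∫ ω, X 0 ω ^ l ∂P) ^ t := by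
  induction t with
  | zero =>
    have h0 : ∀ ω : Ω, sarrtF X n l 0 ω = 1 := fun ω => by
      rw [sarrtF, Set.indicator_of_mem
        (show ω ∈ {ω | ∀ j < 0, sarrtLabel X n j ω ≠ 0} from fun j hj => absurd hj (by omega))]
      simp
    rw [integral_congr_ae (ae_of_all _ h0)]
    simp
  | succ s ih =>
    have hm0 : 0 ≤ ∫ ω, X 0 ω ^ l ∂P :=
      integral_nonneg fun ω => Real.rpow_nonneg (hrange 0 ω).1 l
    calc ∫ ω, sarrtF X n l (s + 1) ω ∂P
        ≤ (∫ ω, X 0 ω ^ l ∂P) * ∫ ω, sarrtF X n l s ω ∂P :=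
          sarrt_rec P hmeas hrange hindep hident hl s
      _ ≤ (∫ ω, X 0 ω ^ l ∂P) * (∫ ω, X 0 ω ^ l ∂P) ^ s :=
          mul_le_mul_of_nonneg_left ih hm0
      _ = (∫ ω, X 0 ω ^ l ∂P) ^ (s + 1) := (pow_succ' _ _).symm

/-- Chernoff/Markov bound for the event that the depth exceeds `t + 1`. -/
lemma sarrt_key (P : Measure Ω) [IsProbabilityMeasure P]
    (hmeas : ∀ i, Measurable (X i))
    (hrange : ∀ i ω, X i ω ∈ Set.Ico (0 : ℝ) 1)
    (hindep : iIndepFun X P)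
    (hident : ∀ i, IdentDistrib (X i) (X 0) P P)
    (hl : 0 ≤ l) (t : ℕ) :
    P {ω | t + 1 ≤ sarrtDepth X n ω}
      ≤ ENNReal.ofReal ((n : ℝ) ^ l * (∫ ω, X 0 ω ^ l ∂P) ^ t) := by
  set F : Ω → ℝ := fun ω => (n : ℝ) ^ l * sarrtF X n l t ω with hF
  have hFmeas : Measurable F := measurable_const.mul (sarrtF_measurable hmeas hl t)
  have hF0 : ∀ ω, 0 ≤ F ω := fun ω =>
    mul_nonneg (Real.rpow_nonneg (Nat.cast_nonneg n) l) (sarrtF_nonneg hrange t ω)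
  have hFint : Integrable F P :=
    (sarrt_integrable_of_01 (sarrtF_measurable hmeas hl t)
      (sarrtF_nonneg hrange t) (sarrtF_le_one hrange hl t)).const_mul _
  have hsub : {ω | t + 1 ≤ sarrtDepth X n ω} ⊆ {ω | 1 ≤ F ω} := by
    intro ω hω
    have hne : ∀ j ≤ t, sarrtLabel X n j ω ≠ 0 := sarrtDepth_ne hω
    have hfe : sarrtF X n l t ω = ∏ j ∈ Finset.range t, X (sarrtLabel X n j ω) ω ^ l :=
      Set.indicator_of_mem
        (show ω ∈ {ω | ∀ j < t, sarrtLabel X n j ω ≠ 0} from fun j hj => hne j hj.le) _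
    have h1 : (1 : ℝ) ≤ (sarrtLabel X n t ω : ℝ) := by
      have := Nat.one_le_iff_ne_zero.mpr (hne t le_rfl)
      exact_mod_cast this
    have h2 : (1 : ℝ) ≤ (n : ℝ) * ∏ j ∈ Finset.range t, X (sarrtLabel X n j ω) ω :=
      h1.trans (sarrtLabel_cast_le_prod hrange t ω)
    have hprod0 : 0 ≤ ∏ j ∈ Finset.range t, X (sarrtLabel X n j ω) ω :=
      Finset.prod_nonneg fun j _ => (hrange _ _).1
    show (1 : ℝ) ≤ F ω
    simp only [hF]
    rw [hfe, Real.finset_prod_rpow _ _ (fun j _ => (hrange _ _).1),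
      ← Real.mul_rpow (Nat.cast_nonneg n) hprod0]
    calc (1 : ℝ) = 1 ^ l := (Real.one_rpow l).symm
      _ ≤ ((n : ℝ) * ∏ j ∈ Finset.range t, X (sarrtLabel X n j ω) ω) ^ l :=
          Real.rpow_le_rpow zero_le_one h2 hl
  have hmar := mul_meas_ge_le_integral_of_nonneg (ae_of_all _ hF0) hFint 1
  rw [one_mul] at hmar
  have hint : ∫ ω, F ω ∂P ≤ (n : ℝ) ^ l * (∫ ω, X 0 ω ^ l ∂P) ^ t := by
    rw [hF, integral_const_mul]
    exact mul_le_mul_of_nonneg_left (sarrt_F_le_pow P hmeas hrange hindep hident hl t)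
      (Real.rpow_nonneg (Nat.cast_nonneg n) l)
  calc P {ω | t + 1 ≤ sarrtDepth X n ω} ≤ P {ω | 1 ≤ F ω} := measure_mono hsub
    _ = ENNReal.ofReal (P {ω | 1 ≤ F ω}).toReal := (ENNReal.ofReal_toReal (measure_ne_top P _)).symm
    _ ≤ ENNReal.ofReal ((n : ℝ) ^ l * (∫ ω, X 0 ω ^ l ∂P) ^ t) :=
        ENNReal.ofReal_le_ofReal (hmar.trans hint)

end Part4

section Main
open MeasureTheory ProbabilityTheory Filter Finset
open scoped ENNReal

/-- Chernoff bound for the depth of node `n` in a SARRT: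
`P(D_n ≥ c log n + 2) ≤ n^{-Ψ(c)}` with `Ψ(c) = c Λ*(-1/c)`. -/
theorem sarrt_depth_chernoff
    {Ω : Type*} [MeasurableSpace Ω] (P : Measure Ω) [IsProbabilityMeasure P]
    (X : ℕ → Ω → ℝ)
    (hmeas : ∀ i, Measurable (X i))
    (hrange : ∀ i ω, X i ω ∈ Set.Ico (0 : ℝ) 1)
    (hindep : iIndepFun X P)
    (hident : ∀ i, IdentDistrib (X i) (X 0) P P) :
    ∀ c : ℝ, 0 < c → ∀ n : ℕ, 1 ≤ n →
      P {ω | c * Real.log n + 2 ≤ (sarrtDepth X n ω : ℝ)}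
        ≤ ENNReal.ofReal ((n : ℝ) ^ (-(c * legendreLogX P (X 0) (-1 / c)))) := by
  intro c hc n hn
  set Λs := legendreLogX P (X 0) (-1 / c) with hΛs
  set E := {ω | c * Real.log n + 2 ≤ (sarrtDepth X n ω : ℝ)} with hE
  by_cases hn1 : n = 1
  · subst hn1
    simp only [Nat.cast_one, Real.one_rpow, ENNReal.ofReal_one]
    exact prob_le_one
  have hn2 : (1 : ℝ) < n := by exact_mod_cast (by omega : 1 < n)
  have hnpos : (0 : ℝ) < n := by positivity
  have hlog : 0 < Real.log n := Real.log_pos hn2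
  have hc0 : c ≠ 0 := hc.ne'
  have hln0 : Real.log n ≠ 0 := hlog.ne'
  set t : ℕ := ⌈c * Real.log n⌉₊ + 1 with ht
  have hsubE : E ⊆ {ω | t + 1 ≤ sarrtDepth X n ω} := by
    intro ω hω
    have hωR : c * Real.log n + 2 ≤ (sarrtDepth X n ω : ℝ) := hω
    have hclog : 0 ≤ c * Real.log n := mul_nonneg hc.le hlog.le
    have h2 : 2 ≤ sarrtDepth X n ω := by
      exact_mod_cast (by linarith : (2 : ℝ) ≤ (sarrtDepth X n ω : ℝ))
    have hceil : ⌈c * Real.log n⌉₊ ≤ sarrtDepth X n ω - 2 := by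
      apply Nat.ceil_le.mpr
      have hcast : ((sarrtDepth X n ω - 2 : ℕ) : ℝ) = (sarrtDepth X n ω : ℝ) - 2 := by
        push_cast [h2]
        ring
      rw [hcast]; linarith
    show t + 1 ≤ sarrtDepth X n ω
    omega
  have hkey : ∀ l : ℝ, 0 ≤ l →
      P E ≤ ENNReal.ofReal ((n : ℝ) ^ l * (∫ ω, X 0 ω ^ l ∂P) ^ t) := fun l hl =>
    (measure_mono hsubE).trans (sarrt_key P hmeas hrange hindep hident hl t)
  by_cases hPE : P E = 0
  · rw [hPE]; exact zero_le
  have hPfin : P E ≠ ∞ := measure_ne_top P E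
  set p := (P E).toReal with hp
  have hppos : 0 < p := ENNReal.toReal_pos hPE hPfin
  have hp1 : P E = ENNReal.ofReal p := (ENNReal.ofReal_toReal hPfin).symm
  have hB : ∀ l : {l : ℝ // 0 ≤ l},
      (l : ℝ) * (-1 / c) - cgfLogX P (X 0) l ≤ (-Real.log p) / (c * Real.log n) := by
    rintro ⟨l, hl⟩
    simp only
    set m := ∫ ω, X 0 ω ^ l ∂P with hm
    have hint1 : Integrable (fun ω => X 0 ω ^ l) P :=
      sarrt_integrable_of_01 (((Real.continuous_rpow_const hl).measurable).comp (hmeas 0))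
        (fun ω => Real.rpow_nonneg (hrange 0 ω).1 l)
        (fun ω => Real.rpow_le_one (hrange 0 ω).1 (hrange 0 ω).2.le hl)
    have hm0 : 0 ≤ m := integral_nonneg fun ω => Real.rpow_nonneg (hrange 0 ω).1 l
    have hm1 : m ≤ 1 := by
      calc m ≤ ∫ _ω, (1 : ℝ) ∂P := integral_mono hint1 (integrable_const 1)
            (fun ω => Real.rpow_le_one (hrange 0 ω).1 (hrange 0 ω).2.le hl)
        _ = 1 := by simp
    have hkl := hkey l hl
    rw [← hm] at hkl
    have hmpos : 0 < m := by
      rcases hm0.lt_or_eq with h | h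
      · exact h
      · exfalso
        rw [← h, zero_pow (by omega : t ≠ 0), mul_zero, ENNReal.ofReal_zero] at hkl
        exact hPE (le_antisymm hkl (zero_le))
    have hreal : p ≤ (n : ℝ) ^ l * m ^ t :=
      (ENNReal.le_ofReal_iff_toReal_le hPfin (by positivity)).mp hkl
    have hmt : (m : ℝ) ^ t ≤ m ^ (c * Real.log n + 1 : ℝ) := by
      rw [← Real.rpow_natCast m t]
      apply Real.rpow_le_rpow_of_exponent_ge hmpos hm1
      have hle := Nat.le_ceil (c * Real.log n)
      rw [ht]
      push_cast
      linarith
    have hchain : p ≤ Real.exp ((l + c * Real.log m) * Real.log n) := by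
      have h1 : (n : ℝ) ^ l = Real.exp (Real.log n * l) := Real.rpow_def_of_pos hnpos l
      have h2 : m ^ (c * Real.log n + 1 : ℝ) = m ^ (c * Real.log n : ℝ) * m := by
        rw [Real.rpow_add hmpos, Real.rpow_one]
      have h3 : m ^ (c * Real.log n : ℝ) = Real.exp (Real.log m * (c * Real.log n)) :=
        Real.rpow_def_of_pos hmpos _
      have hnl0 : 0 ≤ (n : ℝ) ^ l := Real.rpow_nonneg hnpos.le l
      have h4 : (n : ℝ) ^ l * m ^ t ≤ (n : ℝ) ^ l * (m ^ (c * Real.log n : ℝ) * m) := by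
        rw [← h2]; exact mul_le_mul_of_nonneg_left hmt hnl0
      have h5 : (n : ℝ) ^ l * (m ^ (c * Real.log n : ℝ) * m)
          ≤ (n : ℝ) ^ l * m ^ (c * Real.log n : ℝ) :=
        mul_le_mul_of_nonneg_left
          (mul_le_of_le_one_right (Real.rpow_nonneg hmpos.le _) hm1) hnl0
      have h6 : (n : ℝ) ^ l * m ^ (c * Real.log n : ℝ)
          = Real.exp ((l + c * Real.log m) * Real.log n) := by
        rw [h1, h3, ← Real.exp_add]
        ring_nf
      linarith
    have hlogp : Real.log p ≤ (l + c * Real.log m) * Real.log n := by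
      calc Real.log p ≤ Real.log (Real.exp ((l + c * Real.log m) * Real.log n)) :=
            Real.log_le_log hppos hchain
        _ = (l + c * Real.log m) * Real.log n := Real.log_exp _
    have hcgf : cgfLogX P (X 0) l = Real.log m := rfl
    rw [hcgf, le_div_iff₀ (by positivity)]
    have hexpand : (l * (-1 / c) - Real.log m) * (c * Real.log n)
        = -((l + c * Real.log m) * Real.log n) := by
      field_simp
      ring
    rw [hexpand]
    linarith
  haveI : Nonempty {l : ℝ // 0 ≤ l} := ⟨⟨0, le_rfl⟩⟩
  have hsup : Λs ≤ (-Real.log p) / (c * Real.log n) := ciSup_le hB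
  rw [hp1]
  apply ENNReal.ofReal_le_ofReal
  have hexp : Real.log p / Real.log n ≤ -(c * Λs) := by
    have hmul := mul_le_mul_of_nonneg_left hsup hc.le
    have heq : c * ((-Real.log p) / (c * Real.log n)) = -(Real.log p / Real.log n) := by
      field_simp
    rw [heq] at hmul
    linarith
  calc p = (n : ℝ) ^ (Real.log p / Real.log n) := by
        rw [Real.rpow_def_of_pos hnpos, mul_comm, div_mul_cancel₀ _ hln0, Real.exp_log hppos]
    _ ≤ (n : ℝ) ^ (-(c * Λs)) := Real.rpow_le_rpow_of_exponent_le hn2.le hexp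

end Main
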